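/- For every x > 0, ψ(x) − ϑ(x) ≤ ψ(x^{1/2}) + ψ(x^{1/3}) + ψ(x^{1/5}), and ψ(x) − ϑ(x) ≥ ψ(x^{1/2}) + ψ(x^{1/3}) + ψ(x^{1/7}). -/

import Mathlib

open Finset ArithmeticFunction

noncomputable def chebyshevPsi (x : ℝ) : ℝ := ∑ n ∈ Finset.Icc 1 ⌊x⌋₊, Λ n

noncomputable def chebyshevTheta (x : ℝ) : ℝ :=
  ∑ p ∈ (Finset.Icc 1 ⌊x⌋₊).filter Nat.Prime, Real.log p

noncomputable def primePi (x : ℝ) : ℝ :=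
  ((Finset.Icc 1 ⌊x⌋₊).filter Nat.Prime).card

theorem chebyshevPsi_eq_psi : chebyshevPsi = Chebyshev.psi := by
  ext x
  rw [chebyshevPsi, Chebyshev.psi, ← Icc_add_one_left_eq_Ioc, zero_add]

theorem chebyshevTheta_eq_theta : chebyshevTheta = Chebyshev.theta := by
  ext x
  rw [chebyshevTheta, Chebyshev.theta, ← Icc_add_one_left_eq_Ioc, zero_add]

theorem psi_sub_theta_bounds (x : ℝ) (hx : 0 < x) :
    chebyshevPsi x - chebyshevTheta x ≤
      chebyshevPsi (x ^ ((1 : ℝ) / 2)) + chebyshevPsi (x ^ ((1 : ℝ) / 3)) +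
        chebyshevPsi (x ^ ((1 : ℝ) / 5)) ∧
    chebyshevPsi (x ^ ((1 : ℝ) / 2)) + chebyshevPsi (x ^ ((1 : ℝ) / 3)) +
        chebyshevPsi (x ^ ((1 : ℝ) / 7)) ≤ chebyshevPsi x - chebyshevTheta x := by
  simp only [chebyshevPsi_eq_psi, chebyshevTheta_eq_theta, one_div]
  exact ⟨Chebyshev.psi_sub_theta_le_psi_add_psi_add_psi x,
    Chebyshev.psi_sub_theta_ge_psi_add_psi_add_psi hx.le⟩
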